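/- arXiv:1601.03245 — 8 statements merged into one kernel-verified Lean document; each statement's English description precedes it below -/
import Mathlib

section
/- Let k ∈ ℂ, let (S, C, D) be a Jacobi triple with modulus k, let κ, β ∈ ℂ with κ² = k, κ ≠ 0, β² = 1 − k, and let p, q ∈ ℤ. On the open set U = { z ∈ ℂ : D(z/κ) ≠ 0 }, the triple (z ↦ (−1)^p κ·C(z/κ)/D(z/κ), z ↦ (−1)^{p+q} β/D(z/κ), z ↦ (−1)^{q+1} β·S(z/κ)/D(z/κ)) satisfies system (1) with modulus 1/k. (This is the reciprocal-modulus form of sn = (−1)^p √k cd, cn = (−1)^{p+q} √(1−k) nd, dn = (−1)^{q+1} √(1−k) sd.) -/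
/-! Put `w = z / κ`. Both quadratic identities reduce to the classical
`dn² = k cn² + (1 - k)` and `dn² = (1 - k) sn² + cn²`, and the quotient rule gives
`d/dz (κ cn w / dn w) = (k - 1) sn w / (dn w)²`, which is the product of the other two functions since
`β² = 1 - k`. The signs `(-1)^p`, `(-1)^q` only enter through their squares. -/

/-- A Jacobi triple with modulus `k`: the model is `(sn(·|k), cn(·|k), dn(·|k))`. -/
def IsJacobiTriple (k : ℂ) (S C D : ℂ → ℂ) : Prop :=
  ∀ z : ℂ, HasDerivAt S (C z * D z) z ∧ HasDerivAt C (-(S z * D z)) z ∧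
    HasDerivAt D (-(k * S z * C z)) z ∧
    S z ^ 2 + C z ^ 2 = 1 ∧ D z ^ 2 + k * S z ^ 2 = 1

/-- A triple `(St, Ct, Dt)` satisfies system (1) with modulus `m` on `U`:
at every point of `U` the functions are differentiable with `St′ = Ct·Dt`,
and `St² + Ct² = 1` and `Dt² + m·St² = 1` hold on `U`. -/
def SatisfiesSystem1 (m : ℂ) (St Ct Dt : ℂ → ℂ) (U : Set ℂ) : Prop :=
  ∀ z ∈ U, HasDerivAt St (Ct z * Dt z) z ∧
    DifferentiableAt ℂ Ct z ∧ DifferentiableAt ℂ Dt z ∧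
    St z ^ 2 + Ct z ^ 2 = 1 ∧ Dt z ^ 2 + m * St z ^ 2 = 1

theorem neg_one_zpow_sq {α : Type*} [DivisionRing α] (n : ℤ) : ((-1 : α) ^ n) ^ 2 = 1 := by
  rw [← zpow_natCast, ← zpow_mul, mul_comm, zpow_mul]
  norm_num

namespace IsJacobiTriple

variable {k : ℂ} {S C D : ℂ → ℂ}

theorem differentiable_S (hJ : IsJacobiTriple k S C D) : Differentiable ℂ S :=
  fun z => (hJ z).1.differentiableAt

theorem differentiable_D (hJ : IsJacobiTriple k S C D) : Differentiable ℂ D :=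
  fun z => (hJ z).2.2.1.differentiableAt

theorem sq_D_eq_mul_sq_C_add (hJ : IsJacobiTriple k S C D) (w : ℂ) :
    D w ^ 2 = k * C w ^ 2 + (1 - k) := by
  obtain ⟨-, -, -, hSC, hDS⟩ := hJ w
  linear_combination hDS - k * hSC

theorem sq_D_eq_mul_sq_S_add (hJ : IsJacobiTriple k S C D) (w : ℂ) :
    D w ^ 2 = (1 - k) * S w ^ 2 + C w ^ 2 := by
  obtain ⟨-, -, -, hSC, hDS⟩ := hJ w
  linear_combination hDS - hSC

theorem hasDerivAt_mul_C_div_D (hJ : IsJacobiTriple k S C D) (a : ℂ) {w : ℂ} (hd : D w ≠ 0) :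
    HasDerivAt (fun w => a * C w / D w) (a * (k - 1) * S w / D w ^ 2) w := by
  obtain ⟨-, hC, hD, -, -⟩ := hJ w
  refine ((hC.const_mul a).div hD hd).congr_deriv ?_
  rw [div_left_inj' (pow_ne_zero 2 hd)]
  linear_combination -a * S w * hJ.sq_D_eq_mul_sq_C_add w

end IsJacobiTriple

theorem stmt_2 (k : ℂ) (S C D : ℂ → ℂ) (hJ : IsJacobiTriple k S C D)
    (κ β : ℂ) (hκ : κ ^ 2 = k) (hκ0 : κ ≠ 0) (hβ : β ^ 2 = 1 - k) (p q : ℤ) :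
    SatisfiesSystem1 (1 / k)
      (fun z => (-1 : ℂ) ^ p * κ * C (z / κ) / D (z / κ))
      (fun z => (-1 : ℂ) ^ (p + q) * β / D (z / κ))
      (fun z => (-1 : ℂ) ^ (q + 1) * β * S (z / κ) / D (z / κ))
      {z : ℂ | D (z / κ) ≠ 0} := by
  intro z hd
  have hk : k ≠ 0 := hκ ▸ pow_ne_zero 2 hκ0
  have hε : ((-1 : ℂ) ^ p) ^ 2 = 1 := neg_one_zpow_sq p
  have hη : ((-1 : ℂ) ^ q) ^ 2 = 1 := neg_one_zpow_sq q
  simp only [zpow_add₀ (by norm_num : (-1 : ℂ) ≠ 0), zpow_one]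
  have hS := hJ.differentiable_S
  have hD := hJ.differentiable_D
  refine ⟨?_, by fun_prop (disch := exact hd), by fun_prop (disch := exact hd), ?_, ?_⟩
  · refine ((hJ.hasDerivAt_mul_C_div_D ((-1 : ℂ) ^ p * κ) hd).comp z
      ((hasDerivAt_id' z).div_const κ)).congr_deriv ?_
    field_simp
    rw [hη, hβ]
    ring
  · field_simp
    rw [hε, hη, hβ, hκ, div_eq_one_iff_eq (pow_ne_zero 2 hd)]
    linear_combination -hJ.sq_D_eq_mul_sq_C_add (z / κ)
  · field_simp
    rw [hε, hη, hβ, hκ, div_eq_iff (pow_ne_zero 2 hd)]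
    linear_combination -k * hJ.sq_D_eq_mul_sq_S_add (z / κ)
end

section
/- Let k ∈ ℂ, let (S, C, D) be a Jacobi triple with modulus k, and let κ ∈ ℂ with κ² = k, κ ≠ 0. On the open set U = { z ∈ ℂ : D(−iz/κ) ≠ 0 }, the triple (z ↦ i·κ·S(−iz/κ)/D(−iz/κ), z ↦ 1/D(−iz/κ), z ↦ C(−iz/κ)/D(−iz/κ)) satisfies system (1) with modulus (k − 1)/k. (This is sn(i√k x | −(1−k)/k) = i√k sd(x|k), cn = nd(x|k), dn = cd(x|k).) -/
/-!
Put `w = -iz/κ`. The new triple is `(iκ·sd, nd, cd)` evaluated at `w`, and `(iκ)² = -k`.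
Dividing `S² + C² = 1` and `D² + kS² = 1` by `D²` gives its two quadratic relations, and since
`sd′ = cd·nd`, the chain-rule factor `-i/κ` cancels the prefactor `iκ` in the derivative.
-/

open Complex

namespace IsJacobiTriple

variable {k : ℂ} {S C D : ℂ → ℂ}

/-- The numerator of the quotient rule is `C·(D² + kS²) = C`. -/
theorem hasDerivAt_div (hJ : IsJacobiTriple k S C D) {w : ℂ} (hw : D w ≠ 0) :
    HasDerivAt (fun w => S w / D w) (C w / D w ^ 2) w := by
  obtain ⟨hS, -, hD, -, hDS⟩ := hJ w
  refine (hS.div hD hw).congr_deriv ?_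
  rw [div_left_inj' (pow_ne_zero 2 hw)]
  linear_combination C w * hDS

end IsJacobiTriple

section ImaginaryModulus

variable {k μ s c d : ℂ}

theorem imaginary_sn_sq_add_cn_sq (hμ : μ ^ 2 = -k) (hd : d ≠ 0)
    (hDS : d ^ 2 + k * s ^ 2 = 1) :
    (μ * s / d) ^ 2 + (1 / d) ^ 2 = 1 := by
  field_simp
  linear_combination s ^ 2 * hμ - hDS

theorem imaginary_dn_sq_add_mul_sn_sq (hμ : μ ^ 2 = -k) (hk : k ≠ 0) (hd : d ≠ 0)
    (hSC : s ^ 2 + c ^ 2 = 1) (hDS : d ^ 2 + k * s ^ 2 = 1) :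
    (c / d) ^ 2 + (k - 1) / k * (μ * s / d) ^ 2 = 1 := by
  field_simp
  linear_combination k * hSC - k * hDS + (k - 1) * s ^ 2 * hμ

end ImaginaryModulus

theorem stmt_5 (k : ℂ) (S C D : ℂ → ℂ) (hJ : IsJacobiTriple k S C D)
    (κ : ℂ) (hκ : κ ^ 2 = k) (hκ0 : κ ≠ 0) :
    SatisfiesSystem1 ((k - 1) / k)
      (fun z => Complex.I * κ * S (-Complex.I * z / κ) / D (-Complex.I * z / κ))
      (fun z => 1 / D (-Complex.I * z / κ))
      (fun z => C (-Complex.I * z / κ) / D (-Complex.I * z / κ))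
      {z : ℂ | D (-Complex.I * z / κ) ≠ 0} := by
  intro z hz
  have hμ : (I * κ) ^ 2 = -k := by rw [mul_pow, I_sq, hκ, neg_one_mul]
  have hlin : HasDerivAt (fun z => -I * z / κ) (-I / κ) z := by
    simpa using ((hasDerivAt_id z).const_mul (-I)).div_const κ
  obtain ⟨-, hC, hD, hSC, hDS⟩ := hJ (-I * z / κ)
  have hDz := (hD.comp z hlin).differentiableAt
  refine ⟨?_, (differentiableAt_const 1).div hDz hz,
    (hC.comp z hlin).differentiableAt.div hDz hz,
    imaginary_sn_sq_add_cn_sq hμ hz hDS,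
    imaginary_dn_sq_add_mul_sn_sq hμ (hκ ▸ pow_ne_zero 2 hκ0) hz hSC hDS⟩
  have hSt : (fun z => I * κ * S (-I * z / κ) / D (-I * z / κ)) =
      fun z => I * κ * ((fun w => S w / D w) ∘ fun z => -I * z / κ) z := by
    simp only [Function.comp_apply, mul_div_assoc]
  rw [hSt]
  refine (((hJ.hasDerivAt_div hz).comp z hlin).const_mul (I * κ)).congr_deriv ?_
  field_simp
  rw [I_sq]
  ring
end

section
/- (Half-argument Landen transformation, sn-component.) Let k ∈ ℂ, let (S, C, D) be a Jacobi triple with modulus k, let ε ∈ {1, −1}, and let β ∈ ℂ with β² = 1 − k and εβ + 1 ≠ 0. Define g(z) = (ε + β)·C(2z/(εβ + 1)) / (β − D(2z/(εβ + 1))) on the open set U = { z ∈ ℂ : β − D(2z/(εβ + 1)) ≠ 0 }. Then g is differentiable on U and for every z ∈ U, g′(z)² = (1 − g(z)²)·(1 − m·g(z)²), where m = ((1 − εβ)/(1 + εβ))². (This says that g agrees, up to a phase shift, with sn(· | m); cf. sn(½(ε√(1−k)+1)x + φ | m) = (ε+√(1−k))·cn(x|k)/(√(1−k) − dn(x|k)).)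 -/
/-!
Write `s, c, d` for `S, C, D` at `w = 2z/(εβ+1)` and `u = β - d`. Since
`d² - k c² = 1 - k = β²`, the quotient `C/(β - D)` has derivative `β S/(β - D)`, and as
`ε + β = ε(εβ + 1)` this gives `g′ = 2εβ s/u`. Clearing denominators, the differential
equation becomes `(u² - (1+εβ)²c²)(u² - (1-εβ)²c²) = 4β²s²u²`, whose left side depends on `ε`
only through `ε² = 1`; it follows from `u² - (1+β²)c² = 2β(βs² - d)` and
`(βs² - d)² - c⁴ = s²u²`.
-/

theorem landen_identity {k β s c d : ℂ} (hβ : β ^ 2 = 1 - k) (hsc : s ^ 2 + c ^ 2 = 1)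
    (hd : d ^ 2 + k * s ^ 2 = 1) :
    ((β - d) ^ 2 - (1 + β) ^ 2 * c ^ 2) * ((β - d) ^ 2 - (1 - β) ^ 2 * c ^ 2) =
      4 * β ^ 2 * s ^ 2 * (β - d) ^ 2 := by
  have hhalf : (β - d) ^ 2 - (1 + β ^ 2) * c ^ 2 = 2 * β * (β * s ^ 2 - d) := by
    linear_combination hd - (1 + β ^ 2) * hsc - s ^ 2 * hβ
  have hsq : (β * s ^ 2 - d) ^ 2 - c ^ 4 = s ^ 2 * (β - d) ^ 2 := by
    linear_combination (1 - s ^ 2) * hd - (1 - s ^ 2) * s ^ 2 * hβ - (1 - s ^ 2 + c ^ 2) * hsc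
  linear_combination
    ((β - d) ^ 2 - (1 + β ^ 2) * c ^ 2 + 2 * β * (β * s ^ 2 - d)) * hhalf + 4 * β ^ 2 * hsq

theorem landen_sq_identity {k ε β s c d : ℂ} (hε : ε ^ 2 = 1) (hβ : β ^ 2 = 1 - k)
    (hsc : s ^ 2 + c ^ 2 = 1) (hd : d ^ 2 + k * s ^ 2 = 1) (hu : β - d ≠ 0)
    (hεβ : 1 + ε * β ≠ 0) :
    (2 * ε * β * s / (β - d)) ^ 2 =
      (1 - ((ε + β) * c / (β - d)) ^ 2) *
        (1 - ((1 - ε * β) / (1 + ε * β)) ^ 2 * ((ε + β) * c / (β - d)) ^ 2) := by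
  have hsum : ε + β = ε * (1 + ε * β) := by linear_combination -β * hε
  rw [hsum]
  field_simp
  rw [hε]
  linear_combination (-1 : ℂ) * landen_identity hβ hsc hd +
    (2 * β ^ 2 * c ^ 2 * (β - d) ^ 2 + β ^ 2 * c ^ 4 * (2 - ε ^ 2 * β ^ 2 - β ^ 2)) * hε

namespace IsJacobiTriple

variable {k : ℂ} {S C D : ℂ → ℂ}

theorem hasDerivAt_div_sub (hJ : IsJacobiTriple k S C D) {β : ℂ} (hβ : β ^ 2 = 1 - k) {w : ℂ}
    (hw : β - D w ≠ 0) :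
    HasDerivAt (fun w => C w / (β - D w)) (β * S w / (β - D w)) w := by
  obtain ⟨-, hC, hD, hsc, hd⟩ := hJ w
  refine (hC.div ((hasDerivAt_const w β).sub hD) hw).congr_deriv ?_
  simp only [Pi.sub_apply]
  field_simp
  linear_combination (-S w) * (hβ - hd + k * hsc)

theorem hasDerivAt_landen (hJ : IsJacobiTriple k S C D) {ε β : ℂ} (hε : ε ^ 2 = 1)
    (hβ : β ^ 2 = 1 - k) (hεβ : ε * β + 1 ≠ 0) {z : ℂ}
    (hz : β - D (2 * z / (ε * β + 1)) ≠ 0) :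
    HasDerivAt (fun z => (ε + β) * C (2 * z / (ε * β + 1)) / (β - D (2 * z / (ε * β + 1))))
      (2 * ε * β * S (2 * z / (ε * β + 1)) / (β - D (2 * z / (ε * β + 1)))) z := by
  have hscale : HasDerivAt (fun z : ℂ => 2 * z / (ε * β + 1)) (2 / (ε * β + 1)) z := by
    simpa using ((hasDerivAt_id z).const_mul (2 : ℂ)).div_const (ε * β + 1)
  have hcomp := ((hJ.hasDerivAt_div_sub hβ hz).comp z hscale).const_mul (ε + β)
  simp only [Function.comp_def, ← mul_div_assoc] at hcomp
  refine hcomp.congr_deriv ?_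
  field_simp
  linear_combination (-β ^ 2 * S (2 * z / (ε * β + 1))) * hε

end IsJacobiTriple

theorem stmt_9 (k : ℂ) (S C D : ℂ → ℂ) (hJ : IsJacobiTriple k S C D)
    (ε : ℂ) (hε : ε = 1 ∨ ε = -1)
    (β : ℂ) (hβ : β ^ 2 = 1 - k) (hβ1 : ε * β + 1 ≠ 0)
    (g : ℂ → ℂ)
    (hg : g = fun z => (ε + β) * C (2 * z / (ε * β + 1)) /
      (β - D (2 * z / (ε * β + 1)))) :
    (∀ z ∈ {z : ℂ | β - D (2 * z / (ε * β + 1)) ≠ 0}, DifferentiableAt ℂ g z) ∧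
    ∀ z ∈ {z : ℂ | β - D (2 * z / (ε * β + 1)) ≠ 0},
      (deriv g z) ^ 2 =
        (1 - g z ^ 2) * (1 - ((1 - ε * β) / (1 + ε * β)) ^ 2 * g z ^ 2) := by
  have hε2 : ε ^ 2 = 1 := by rcases hε with rfl | rfl <;> norm_num
  subst hg
  refine ⟨fun z hz => (hJ.hasDerivAt_landen hε2 hβ hβ1 hz).differentiableAt, fun z hz => ?_⟩
  obtain ⟨-, -, -, hsc, hd⟩ := hJ (2 * z / (ε * β + 1))
  rw [(hJ.hasDerivAt_landen hε2 hβ hβ1 hz).deriv]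
  exact landen_sq_identity hε2 hβ hsc hd hz (by rwa [add_comm])
end

section
/- (Ascending Landen transformation in dn.) Let k ∈ ℂ, let (S, C, D) be a Jacobi triple with modulus k, let ε ∈ {1, −1}, and let β, γ, η ∈ ℂ with β² = 1 − k, β ≠ 0, ε − β ≠ 0, γ² = εβ, γ ≠ 0, η² = ε, and set δ = ε·η·γ (so δ² = β). Writing w = z/(2γ), on the open set U = { z ∈ ℂ : D(w) ≠ 0 }, the triple (z ↦ −(ε·D(w) − β/D(w))/(ε − β), z ↦ (β + ε)·S(w)·C(w)/D(w), z ↦ ε·η·(ε·D(w) + β/D(w))/(2δ)) satisfies system (1) with modulus −ε·(β − ε)²/(4β). (This is sn(2√(ε√(1−k)) x + φ | −ε(√(1−k)−ε)²/(4√(1−k))) = −(ε dn − √(1−k) nd)/(ε − √(1−k)), with the corresponding cn and dn formulas.) -/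
theorem HasDerivAt.comp_div_const {f : ℂ → ℂ} {f' z : ℂ} (a : ℂ) (hf : HasDerivAt f f' (z / a)) :
    HasDerivAt (fun z => f (z / a)) (f' / a) z := by
  have := hf.comp z ((hasDerivAt_id' z).div_const a)
  rwa [mul_one_div] at this

section Landen

variable {k ε β s c d : ℂ}

theorem landen_sn_deriv_eq (hε : ε ^ 2 = 1) (hβ : β ^ 2 = 1 - k) (hd : d ≠ 0) (hεβ : ε - β ≠ 0)
    (γ : ℂ) :
    -(ε * (-(k * s * c) / (2 * γ)) - (0 * d - β * (-(k * s * c) / (2 * γ))) / d ^ 2) / (ε - β) =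
      (β + ε) * s * c / d * ((ε * d + β / d) / (2 * γ)) := by
  have hk : k = (ε - β) * (ε + β) := by linear_combination hβ - hε
  rw [hk]
  field_simp
  ring

theorem landen_sn_sq_add_cn_sq (hε : ε ^ 2 = 1) (hβ : β ^ 2 = 1 - k) (hd : d ≠ 0)
    (hεβ : ε - β ≠ 0) (hsc : s ^ 2 + c ^ 2 = 1) (hds : d ^ 2 + k * s ^ 2 = 1) :
    (-(ε * d - β / d) / (ε - β)) ^ 2 + ((β + ε) * s * c / d) ^ 2 = 1 := by
  have hk : k = (ε - β) * (ε + β) := by linear_combination hβ - hε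
  subst hk
  field_simp
  -- `k²S²C² = k(1 - D²) - (1 - D²)²`, using `C² = 1 - S²` and `kS² = 1 - D²`
  linear_combination ((ε - β) * (ε + β)) ^ 2 * s ^ 2 * hsc
    + ((ε - β) * (ε + β) * (1 - s ^ 2) - (1 - d ^ 2)) * hds + (1 - d ^ 2) ^ 2 * hε

theorem landen_dn_sq_add_mul_sn_sq (hε : ε ^ 2 = 1) (hβ : β ≠ 0) (hd : d ≠ 0)
    (hεβ : ε - β ≠ 0) {γ : ℂ} (hγ : γ ^ 2 = ε * β) :
    ((ε * d + β / d) / (2 * γ)) ^ 2 + -ε * (β - ε) ^ 2 / (4 * β) * (-(ε * d - β / d) / (ε - β)) ^ 2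
      = 1 := by
  have hγ0 : γ ≠ 0 := by
    rintro rfl
    have hε0 : ε ≠ 0 := by rintro rfl; norm_num at hε
    simp [hε0, hβ] at hγ
  field_simp
  rw [hγ]
  linear_combination -4 * β * (ε - β) ^ 2 * (ε * d ^ 2 - β) ^ 2 * hε

end Landen

theorem stmt_10_general (k : ℂ) (S C D : ℂ → ℂ) (hJ : IsJacobiTriple k S C D)
    (ε : ℂ) (hε : ε = 1 ∨ ε = -1)
    (β γ η δ : ℂ) (hβ : β ^ 2 = 1 - k) (hβ0 : β ≠ 0) (hεβ : ε - β ≠ 0)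
    (hγ : γ ^ 2 = ε * β) (hη : η ^ 2 = ε) (hδ : δ = ε * η * γ) :
    SatisfiesSystem1 (-ε * (β - ε) ^ 2 / (4 * β))
      (fun z => -(ε * D (z / (2 * γ)) - β / D (z / (2 * γ))) / (ε - β))
      (fun z => (β + ε) * S (z / (2 * γ)) * C (z / (2 * γ)) / D (z / (2 * γ)))
      (fun z => ε * η * (ε * D (z / (2 * γ)) + β / D (z / (2 * γ))) / (2 * δ))
      {z : ℂ | D (z / (2 * γ)) ≠ 0} := by
  have hε2 : ε ^ 2 = 1 := by rcases hε with rfl | rfl <;> norm_num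
  have hεη : ε * η ≠ 0 := by
    have hε0 : ε ≠ 0 := by rintro rfl; norm_num at hε2
    exact mul_ne_zero hε0 (by rintro rfl; exact hε0 (by simpa using hη.symm))
  have hDt : (fun z => ε * η * (ε * D (z / (2 * γ)) + β / D (z / (2 * γ))) / (2 * δ)) =
      fun z => (ε * D (z / (2 * γ)) + β / D (z / (2 * γ))) / (2 * γ) := by
    funext z
    rw [hδ, mul_left_comm 2, mul_div_mul_left _ _ hεη]
  rw [hDt]
  intro z hz
  obtain ⟨hS, hC, hD, hSC, hDS⟩ := hJ (z / (2 * γ))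
  have hS' := hS.comp_div_const (2 * γ)
  have hC' := hC.comp_div_const (2 * γ)
  have hD' := hD.comp_div_const (2 * γ)
  have hDinv := (hasDerivAt_const z β).div hD' hz
  refine ⟨?_, ?_, ?_, landen_sn_sq_add_cn_sq hε2 hβ hz hεβ hSC hDS,
    landen_dn_sq_add_mul_sn_sq hε2 hβ0 hz hεβ hγ⟩
  · exact (((hD'.const_mul ε).sub hDinv).neg.div_const (ε - β)).congr_deriv
      (landen_sn_deriv_eq hε2 hβ hz hεβ γ)
  · exact (((hS'.const_mul (β + ε)).mul hC').div hD' hz).differentiableAt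
  · exact (((hD'.const_mul ε).add hDinv).div_const (2 * γ)).differentiableAt

theorem stmt_10 (k : ℂ) (S C D : ℂ → ℂ) (hJ : IsJacobiTriple k S C D)
    (ε : ℂ) (hε : ε = 1 ∨ ε = -1)
    (β γ η δ : ℂ) (hβ : β ^ 2 = 1 - k) (hβ0 : β ≠ 0) (hεβ : ε - β ≠ 0)
    (hγ : γ ^ 2 = ε * β) (hγ0 : γ ≠ 0) (hη : η ^ 2 = ε) (hδ : δ = ε * η * γ) :
    SatisfiesSystem1 (-ε * (β - ε) ^ 2 / (4 * β))
      (fun z => -(ε * D (z / (2 * γ)) - β / D (z / (2 * γ))) / (ε - β))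
      (fun z => (β + ε) * S (z / (2 * γ)) * C (z / (2 * γ)) / D (z / (2 * γ)))
      (fun z => ε * η * (ε * D (z / (2 * γ)) + β / D (z / (2 * γ))) / (2 * δ))
      {z : ℂ | D (z / (2 * γ)) ≠ 0} :=
  stmt_10_general k S C D hJ ε hε β γ η δ hβ hβ0 hεβ hγ hη hδ
end

section
/- (Imaginary quarter-period iK′ shift in intrinsic form.) Let k ∈ ℂ, let (S, C, D) be a Jacobi triple with modulus k, and let κ ∈ ℂ with κ² = k, κ ≠ 0. On the open set U = { z ∈ ℂ : S(z) ≠ 0 }, the triple (z ↦ 1/(κ·S(z)), z ↦ −i·D(z)/(κ·S(z)), z ↦ −i·C(z)/S(z)) satisfies system (1) with the same modulus k. (This corresponds to sn(x+iK′|k) = ns(x|k)/√k, cn(x+iK′|k) = −i ds(x|k)/√k, dn(x+iK′|k) = −i cs(x|k).) -/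
open Complex

theorem hasDerivAt_one_div_const_mul {𝕜 𝕜' : Type*} [NontriviallyNormedField 𝕜]
    [NontriviallyNormedField 𝕜'] [NormedAlgebra 𝕜 𝕜'] {f : 𝕜 → 𝕜'} {f' : 𝕜'} {z : 𝕜} (κ : 𝕜')
    (hf : HasDerivAt f f' z) (h : κ * f z ≠ 0) :
    HasDerivAt (fun w => 1 / (κ * f w)) (-(κ * f') / (κ * f z) ^ 2) z := by
  simpa only [one_div] using (hf.const_mul κ).fun_inv h

section ShiftIdentities

variable {κ s c d : ℂ}

theorem neg_const_mul_div_sq_eq_neg_I_mul (hκ : κ ≠ 0) (hs : s ≠ 0) :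
    -(κ * (c * d)) / (κ * s) ^ 2 = -I * d / (κ * s) * (-I * c / s) := by
  field_simp
  linear_combination -(c * d) * I_sq

theorem one_div_sq_add_neg_I_mul_div_sq (hκ : κ ≠ 0) (hs : s ≠ 0)
    (h : d ^ 2 + κ ^ 2 * s ^ 2 = 1) :
    (1 / (κ * s)) ^ 2 + (-I * d / (κ * s)) ^ 2 = 1 := by
  field_simp
  linear_combination d ^ 2 * I_sq - h

theorem neg_I_mul_div_sq_add_one_div_sq (hκ : κ ≠ 0) (hs : s ≠ 0) (h : s ^ 2 + c ^ 2 = 1) :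
    (-I * c / s) ^ 2 + κ ^ 2 * (1 / (κ * s)) ^ 2 = 1 := by
  field_simp
  linear_combination c ^ 2 * I_sq - h

end ShiftIdentities

theorem stmt_12 (k : ℂ) (S C D : ℂ → ℂ) (hJ : IsJacobiTriple k S C D)
    (κ : ℂ) (hκ : κ ^ 2 = k) (hκ0 : κ ≠ 0) :
    SatisfiesSystem1 k
      (fun z => 1 / (κ * S z))
      (fun z => -Complex.I * D z / (κ * S z))
      (fun z => -Complex.I * C z / S z)
      {z : ℂ | S z ≠ 0} := by
  subst hκ
  intro z (hz : S z ≠ 0)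
  obtain ⟨hS, hC, hD, hSC, hDS⟩ := hJ z
  have hκS : κ * S z ≠ 0 := mul_ne_zero hκ0 hz
  refine ⟨?_, ?_, ?_, ?_, ?_⟩
  · rw [← neg_const_mul_div_sq_eq_neg_I_mul hκ0 hz]
    exact hasDerivAt_one_div_const_mul κ hS hκS
  · exact (hD.differentiableAt.const_mul _).div (hS.differentiableAt.const_mul κ) hκS
  · exact (hC.differentiableAt.const_mul _).div hS.differentiableAt hz
  · exact one_div_sq_add_neg_I_mul_div_sq hκ0 hz hDS
  · exact neg_I_mul_div_sq_add_one_div_sq hκ0 hz hSC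
end

section
/- Let φ : ℝ × ℝ → ℝ be infinitely differentiable (in (x, t)) and suppose that for all (x, t), (1 + φ²)·(∂_t φ + ∂ₓ³ φ) + 6·(∂ₓ φ)·((∂ₓ φ)² − φ·∂ₓ² φ) = 0. Define u(x, t) = 2·∂ₓ (arctan (φ(x, t))) = 2·∂ₓφ(x,t)/(1 + φ(x,t)²). Then u satisfies the positive mKdV equation: ∂_t u + 6·u²·∂ₓ u + ∂ₓ³ u = 0 on ℝ × ℝ. -/
/-- Partial derivative in the first (space) variable. -/
noncomputable def pdx (f : ℝ → ℝ → ℝ) : ℝ → ℝ → ℝ :=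
  fun x t => deriv (fun x' => f x' t) x

/-- Partial derivative in the second (time) variable. -/
noncomputable def pdt (f : ℝ → ℝ → ℝ) : ℝ → ℝ → ℝ :=
  fun x t => deriv (fun t' => f x t') t

open Function

lemma sliceX_contDiff {f : ℝ → ℝ → ℝ} (hf : ContDiff ℝ (⊤ : ℕ∞) (uncurry f)) (t : ℝ) :
    ContDiff ℝ (⊤ : ℕ∞) (fun x' => f x' t) :=
  hf.comp (contDiff_id.prodMk contDiff_const)

lemma sliceT_contDiff {f : ℝ → ℝ → ℝ} (hf : ContDiff ℝ (⊤ : ℕ∞) (uncurry f)) (x : ℝ) :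
    ContDiff ℝ (⊤ : ℕ∞) (fun t' => f x t') :=
  hf.comp (contDiff_const.prodMk contDiff_id)

lemma hasDerivAt_pdx {f : ℝ → ℝ → ℝ} (hf : ContDiff ℝ (⊤ : ℕ∞) (uncurry f)) (x t : ℝ) :
    HasDerivAt (fun x' => f x' t) (pdx f x t) x :=
  ((sliceX_contDiff hf t).differentiable (by simp) x).hasDerivAt

lemma hasDerivAt_pdt {f : ℝ → ℝ → ℝ} (hf : ContDiff ℝ (⊤ : ℕ∞) (uncurry f)) (x t : ℝ) :
    HasDerivAt (fun t' => f x t') (pdt f x t) t :=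
  ((sliceT_contDiff hf x).differentiable (by simp) t).hasDerivAt

lemma pdx_eq_fderiv {f : ℝ → ℝ → ℝ} (hf : ContDiff ℝ (⊤ : ℕ∞) (uncurry f)) (x t : ℝ) :
    pdx f x t = fderiv ℝ (uncurry f) (x, t) (1, 0) := by
  have hL : HasFDerivAt (fun x' : ℝ => (x', t))
      ((ContinuousLinearMap.id ℝ ℝ).prod 0) x :=
    (hasFDerivAt_id x).prodMk (hasFDerivAt_const t x)
  have hF : HasFDerivAt (uncurry f) (fderiv ℝ (uncurry f) (x, t)) (x, t) :=
    (hf.differentiable (by simp) (x, t)).hasFDerivAt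
  have hc : HasDerivAt (fun x' => f x' t)
      (((fderiv ℝ (uncurry f) (x, t)).comp ((ContinuousLinearMap.id ℝ ℝ).prod 0)) 1) x :=
    (hF.comp (f := fun x' : ℝ => (x', t)) x hL).hasDerivAt
  have := hc.deriv
  simp only [pdx]
  rw [this]
  simp

lemma pdt_eq_fderiv {f : ℝ → ℝ → ℝ} (hf : ContDiff ℝ (⊤ : ℕ∞) (uncurry f)) (x t : ℝ) :
    pdt f x t = fderiv ℝ (uncurry f) (x, t) (0, 1) := by
  have hL : HasFDerivAt (fun t' : ℝ => (x, t'))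
      ((0 : ℝ →L[ℝ] ℝ).prod (ContinuousLinearMap.id ℝ ℝ)) t :=
    (hasFDerivAt_const x t).prodMk (hasFDerivAt_id t)
  have hF : HasFDerivAt (uncurry f) (fderiv ℝ (uncurry f) (x, t)) (x, t) :=
    (hf.differentiable (by simp) (x, t)).hasFDerivAt
  have hc : HasDerivAt (fun t' => f x t')
      (((fderiv ℝ (uncurry f) (x, t)).comp ((0 : ℝ →L[ℝ] ℝ).prod (ContinuousLinearMap.id ℝ ℝ))) 1) t :=
    (hF.comp (f := fun t' : ℝ => (x, t')) t hL).hasDerivAt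
  have := hc.deriv
  simp only [pdt]
  rw [this]
  simp

lemma pdx_contDiff {f : ℝ → ℝ → ℝ} (hf : ContDiff ℝ (⊤ : ℕ∞) (uncurry f)) :
    ContDiff ℝ (⊤ : ℕ∞) (uncurry (pdx f)) := by
  have : uncurry (pdx f) = fun p : ℝ × ℝ => fderiv ℝ (uncurry f) p (1, 0) := by
    funext p
    exact pdx_eq_fderiv hf p.1 p.2
  rw [this]
  exact (hf.fderiv_right (by simp)).clm_apply contDiff_const

lemma pdt_contDiff {f : ℝ → ℝ → ℝ} (hf : ContDiff ℝ (⊤ : ℕ∞) (uncurry f)) :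
    ContDiff ℝ (⊤ : ℕ∞) (uncurry (pdt f)) := by
  have : uncurry (pdt f) = fun p : ℝ × ℝ => fderiv ℝ (uncurry f) p (0, 1) := by
    funext p
    exact pdt_eq_fderiv hf p.1 p.2
  rw [this]
  exact (hf.fderiv_right (by simp)).clm_apply contDiff_const

lemma pdt_pdx_comm {f : ℝ → ℝ → ℝ} (hf : ContDiff ℝ (⊤ : ℕ∞) (uncurry f)) (x t : ℝ) :
    pdt (pdx f) x t = pdx (pdt f) x t := by
  have hdF : ∀ y, HasFDerivAt (uncurry f) (fderiv ℝ (uncurry f) y) y :=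
    fun y => (hf.differentiable (by simp) y).hasFDerivAt
  have hdF2 : HasFDerivAt (fderiv ℝ (uncurry f))
      (fderiv ℝ (fderiv ℝ (uncurry f)) (x, t)) (x, t) :=
    (((hf.fderiv_right (m := 1) (by norm_cast)).differentiable (by simp)) (x, t)).hasFDerivAt
  have hsymm := second_derivative_symmetric hdF hdF2 ((1:ℝ), (0:ℝ)) (0, 1)
  have hdiff : DifferentiableAt ℝ (fderiv ℝ (uncurry f)) (x, t) :=
    ((hf.fderiv_right (m := 1) (by norm_cast)).differentiable (by simp)) (x, t)
  have e1 : uncurry (pdx f) = fun p : ℝ × ℝ => fderiv ℝ (uncurry f) p (1, 0) :=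
    funext fun p => pdx_eq_fderiv hf p.1 p.2
  have e2 : uncurry (pdt f) = fun p : ℝ × ℝ => fderiv ℝ (uncurry f) p (0, 1) :=
    funext fun p => pdt_eq_fderiv hf p.1 p.2
  have l1 : pdt (pdx f) x t = fderiv ℝ (uncurry (pdx f)) (x, t) (0, 1) :=
    pdt_eq_fderiv (pdx_contDiff hf) x t
  have l2 : pdx (pdt f) x t = fderiv ℝ (uncurry (pdt f)) (x, t) (1, 0) :=
    pdx_eq_fderiv (pdt_contDiff hf) x t
  rw [l1, l2, e1, e2, fderiv_clm_apply hdiff (differentiableAt_const _),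
    fderiv_clm_apply hdiff (differentiableAt_const _)]
  simp [hsymm]

lemma keyalg (a b c d e q r : ℝ)
    (h1 : (1 + a ^ 2) * (q + d) + 6 * b * (b ^ 2 - a * c) = 0)
    (h2 : 2 * a * b * (q + d) + (1 + a ^ 2) * (r + e) + 12 * b ^ 2 * c
        - 6 * a * c ^ 2 - 6 * a * b * d = 0) :
    (2 * r * (1 + a ^ 2) - 4 * a * b * q) / (1 + a ^ 2) ^ 2
      + 6 * (2 * b / (1 + a ^ 2)) ^ 2 *
        ((2 * c - 4 * a * b ^ 2 + 2 * a ^ 2 * c) / (1 + a ^ 2) ^ 2)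
      + (2 * e - 24 * b ^ 2 * c - 12 * a * c ^ 2 - 16 * a * b * d + 48 * a * b ^ 4
          + 6 * a ^ 2 * e + 48 * a ^ 2 * b ^ 2 * c - 24 * a ^ 3 * c ^ 2
          - 32 * a ^ 3 * b * d - 48 * a ^ 3 * b ^ 4 + 6 * a ^ 4 * e
          + 72 * a ^ 4 * b ^ 2 * c - 12 * a ^ 5 * c ^ 2 - 16 * a ^ 5 * b * d
          + 2 * a ^ 6 * e) / (1 + a ^ 2) ^ 4 = 0 := by
  have hs : (1 + a ^ 2 : ℝ) ≠ 0 := by positivity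
  have hr : r = (-(2 * a * b * (q + d)) - (1 + a ^ 2) * e - 12 * b ^ 2 * c
      + 6 * a * c ^ 2 + 6 * a * b * d) / (1 + a ^ 2) := by
    rw [eq_div_iff hs]; linear_combination h2
  subst hr
  have hq : q = (-((1 + a ^ 2) * d) - 6 * b * (b ^ 2 - a * c)) / (1 + a ^ 2) := by
    rw [eq_div_iff hs]; linear_combination h1
  subst hq
  field_simp
  ring

theorem stmt_14 (φ : ℝ → ℝ → ℝ)
    (hφ : ContDiff ℝ (⊤ : ℕ∞) (Function.uncurry φ))
    (heq : ∀ x t : ℝ,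
      (1 + φ x t ^ 2) * (pdt φ x t + pdx (pdx (pdx φ)) x t) +
        6 * pdx φ x t * ((pdx φ x t) ^ 2 - φ x t * pdx (pdx φ) x t) = 0)
    (u : ℝ → ℝ → ℝ)
    (hu : u = fun x t => 2 * pdx φ x t / (1 + φ x t ^ 2)) :
    ∀ x t : ℝ,
      pdt u x t + 6 * u x t ^ 2 * pdx u x t + pdx (pdx (pdx u)) x t = 0 := by
  subst hu
  have hφ1 : ContDiff ℝ (⊤ : ℕ∞) (uncurry (pdx φ)) := pdx_contDiff hφ
  have hφ2 : ContDiff ℝ (⊤ : ℕ∞) (uncurry (pdx (pdx φ))) := pdx_contDiff hφ1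
  have hφ3 : ContDiff ℝ (⊤ : ℕ∞) (uncurry (pdx (pdx (pdx φ)))) := pdx_contDiff hφ2
  have hφt : ContDiff ℝ (⊤ : ℕ∞) (uncurry (pdt φ)) := pdt_contDiff hφ
  intro x t
  -- first x-derivative of u, as a function
  have h1f : pdx (fun x t => 2 * pdx φ x t / (1 + φ x t ^ 2)) =
      fun X T => (2 * pdx (pdx φ) X T - 4 * φ X T * pdx φ X T ^ 2
        + 2 * φ X T ^ 2 * pdx (pdx φ) X T) / (1 + φ X T ^ 2) ^ 2 := by
    funext X T
    have ha := hasDerivAt_pdx hφ X T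
    have hb := hasDerivAt_pdx hφ1 X T
    have hden : (1 + φ X T ^ 2 : ℝ) ≠ 0 := by positivity
    have H : HasDerivAt (fun x' => 2 * pdx φ x' T / (1 + φ x' T ^ 2)) _ X :=
      (hb.const_mul 2).div ((ha.pow 2).const_add 1) hden
    exact H.deriv.trans (by field_simp; ring)
  -- second x-derivative of u, as a function
  have h2f : pdx (fun X T => (2 * pdx (pdx φ) X T - 4 * φ X T * pdx φ X T ^ 2
        + 2 * φ X T ^ 2 * pdx (pdx φ) X T) / (1 + φ X T ^ 2) ^ 2) =
      fun X T => (2 * pdx (pdx (pdx φ)) X T - 4 * pdx φ X T ^ 3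
        - 12 * φ X T * pdx φ X T * pdx (pdx φ) X T
        + 4 * φ X T ^ 2 * pdx (pdx (pdx φ)) X T + 12 * φ X T ^ 2 * pdx φ X T ^ 3
        - 12 * φ X T ^ 3 * pdx φ X T * pdx (pdx φ) X T
        + 2 * φ X T ^ 4 * pdx (pdx (pdx φ)) X T) / (1 + φ X T ^ 2) ^ 3 := by
    funext X T
    have ha := hasDerivAt_pdx hφ X T
    have hb := hasDerivAt_pdx hφ1 X T
    have hc := hasDerivAt_pdx hφ2 X T
    have hden : (1 + φ X T ^ 2 : ℝ) ≠ 0 := by positivity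
    have hden2 : ((1 + φ X T ^ 2 : ℝ)) ^ 2 ≠ 0 := by positivity
    have H : HasDerivAt (fun x' => (2 * pdx (pdx φ) x' T - 4 * φ x' T * pdx φ x' T ^ 2
        + 2 * φ x' T ^ 2 * pdx (pdx φ) x' T) / (1 + φ x' T ^ 2) ^ 2) _ X :=
      ((((hc.const_mul 2).sub ((ha.const_mul 4).mul (hb.pow 2))).add
        (((ha.pow 2).const_mul 2).mul hc))).div
        (((ha.pow 2).const_add 1).pow 2) hden2
    exact H.deriv.trans (by simp only [Pi.pow_apply, Pi.add_apply, Pi.mul_apply, Pi.sub_apply, Nat.cast_ofNat]; field_simp; ring)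
  -- third x-derivative of u, at the point
  have h3 : pdx (fun X T => (2 * pdx (pdx (pdx φ)) X T - 4 * pdx φ X T ^ 3
        - 12 * φ X T * pdx φ X T * pdx (pdx φ) X T
        + 4 * φ X T ^ 2 * pdx (pdx (pdx φ)) X T + 12 * φ X T ^ 2 * pdx φ X T ^ 3
        - 12 * φ X T ^ 3 * pdx φ X T * pdx (pdx φ) X T
        + 2 * φ X T ^ 4 * pdx (pdx (pdx φ)) X T) / (1 + φ X T ^ 2) ^ 3) x t =
      (2 * pdx (pdx (pdx (pdx φ))) x t - 24 * pdx φ x t ^ 2 * pdx (pdx φ) x t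
        - 12 * φ x t * pdx (pdx φ) x t ^ 2
        - 16 * φ x t * pdx φ x t * pdx (pdx (pdx φ)) x t
        + 48 * φ x t * pdx φ x t ^ 4
        + 6 * φ x t ^ 2 * pdx (pdx (pdx (pdx φ))) x t
        + 48 * φ x t ^ 2 * pdx φ x t ^ 2 * pdx (pdx φ) x t
        - 24 * φ x t ^ 3 * pdx (pdx φ) x t ^ 2
        - 32 * φ x t ^ 3 * pdx φ x t * pdx (pdx (pdx φ)) x t
        - 48 * φ x t ^ 3 * pdx φ x t ^ 4
        + 6 * φ x t ^ 4 * pdx (pdx (pdx (pdx φ))) x t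
        + 72 * φ x t ^ 4 * pdx φ x t ^ 2 * pdx (pdx φ) x t
        - 12 * φ x t ^ 5 * pdx (pdx φ) x t ^ 2
        - 16 * φ x t ^ 5 * pdx φ x t * pdx (pdx (pdx φ)) x t
        + 2 * φ x t ^ 6 * pdx (pdx (pdx (pdx φ))) x t) / (1 + φ x t ^ 2) ^ 4 := by
    have ha := hasDerivAt_pdx hφ x t
    have hb := hasDerivAt_pdx hφ1 x t
    have hc := hasDerivAt_pdx hφ2 x t
    have hd := hasDerivAt_pdx hφ3 x t
    have hden : (1 + φ x t ^ 2 : ℝ) ≠ 0 := by positivity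
    have hden3 : ((1 + φ x t ^ 2 : ℝ)) ^ 3 ≠ 0 := by positivity
    have H : HasDerivAt (fun x' => (2 * pdx (pdx (pdx φ)) x' t - 4 * pdx φ x' t ^ 3
        - 12 * φ x' t * pdx φ x' t * pdx (pdx φ) x' t
        + 4 * φ x' t ^ 2 * pdx (pdx (pdx φ)) x' t + 12 * φ x' t ^ 2 * pdx φ x' t ^ 3
        - 12 * φ x' t ^ 3 * pdx φ x' t * pdx (pdx φ) x' t
        + 2 * φ x' t ^ 4 * pdx (pdx (pdx φ)) x' t) / (1 + φ x' t ^ 2) ^ 3) _ x :=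
      ((((((((hd.const_mul 2).sub ((hb.pow 3).const_mul 4)).sub
        (((ha.const_mul 12).mul hb).mul hc)).add
        (((ha.pow 2).const_mul 4).mul hd)).add
        (((ha.pow 2).const_mul 12).mul (hb.pow 3))).sub
        ((((ha.pow 3).const_mul 12).mul hb).mul hc)).add
        (((ha.pow 4).const_mul 2).mul hd))).div
        (((ha.pow 2).const_add 1).pow 3) hden3
    exact H.deriv.trans (by simp only [Pi.pow_apply, Pi.add_apply, Pi.mul_apply, Pi.sub_apply, Nat.cast_ofNat]; field_simp; ring)
  -- time derivative of u, at the point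
  have htu : pdt (fun x t => 2 * pdx φ x t / (1 + φ x t ^ 2)) x t =
      (2 * pdx (pdt φ) x t * (1 + φ x t ^ 2)
        - 4 * φ x t * pdx φ x t * pdt φ x t) / (1 + φ x t ^ 2) ^ 2 := by
    have haT := hasDerivAt_pdt hφ x t
    have hbT := hasDerivAt_pdt hφ1 x t
    have hden : (1 + φ x t ^ 2 : ℝ) ≠ 0 := by positivity
    have H : HasDerivAt (fun t' => 2 * pdx φ x t' / (1 + φ x t' ^ 2)) _ t :=
      (hbT.const_mul 2).div ((haT.pow 2).const_add 1) hden
    refine H.deriv.trans ?_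
    rw [pdt_pdx_comm hφ x t]
    field_simp
    ring
  -- equation (59) at the point
  have hC1 : (1 + φ x t ^ 2) * (pdt φ x t + pdx (pdx (pdx φ)) x t)
      + 6 * pdx φ x t * ((pdx φ x t) ^ 2 - φ x t * pdx (pdx φ) x t) = 0 := heq x t
  -- x-derivative of equation (59) at the point
  have hC2 : 2 * φ x t * pdx φ x t * (pdt φ x t + pdx (pdx (pdx φ)) x t)
      + (1 + φ x t ^ 2) * (pdx (pdt φ) x t + pdx (pdx (pdx (pdx φ))) x t)
      + 12 * pdx φ x t ^ 2 * pdx (pdx φ) x t - 6 * φ x t * pdx (pdx φ) x t ^ 2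
      - 6 * φ x t * pdx φ x t * pdx (pdx (pdx φ)) x t = 0 := by
    have ha := hasDerivAt_pdx hφ x t
    have hb := hasDerivAt_pdx hφ1 x t
    have hc := hasDerivAt_pdx hφ2 x t
    have hd := hasDerivAt_pdx hφ3 x t
    have hq' := hasDerivAt_pdx hφt x t
    have Hc : HasDerivAt (fun x' =>
        (1 + φ x' t ^ 2) * (pdt φ x' t + pdx (pdx (pdx φ)) x' t) +
          6 * pdx φ x' t * ((pdx φ x' t) ^ 2 - φ x' t * pdx (pdx φ) x' t)) _ x :=
      (((ha.pow 2).const_add 1).mul (hq'.add hd)).add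
        ((hb.const_mul 6).mul ((hb.pow 2).sub (ha.mul hc)))
    have hzero : HasDerivAt (fun x' =>
        (1 + φ x' t ^ 2) * (pdt φ x' t + pdx (pdx (pdx φ)) x' t) +
          6 * pdx φ x' t * ((pdx φ x' t) ^ 2 - φ x' t * pdx (pdx φ) x' t)) 0 x := by
      have hfe : (fun x' =>
          (1 + φ x' t ^ 2) * (pdt φ x' t + pdx (pdx (pdx φ)) x' t) +
            6 * pdx φ x' t * ((pdx φ x' t) ^ 2 - φ x' t * pdx (pdx φ) x' t)) =
          fun _ => (0 : ℝ) := funext fun y => heq y t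
      rw [hfe]
      exact hasDerivAt_const x 0
    have hDc := Hc.unique hzero
    simp only [Pi.pow_apply, Pi.add_apply] at hDc
    linear_combination hDc
  simp only [h1f, h2f, h3, htu]
  exact keyalg (φ x t) (pdx φ x t) (pdx (pdx φ) x t) (pdx (pdx (pdx φ)) x t)
    (pdx (pdx (pdx (pdx φ))) x t) (pdt φ x t) (pdx (pdt φ) x t) hC1 hC2
end

section
/- Let ψ : ℝ × ℝ → ℝ be infinitely differentiable with ψ(x, t)² ≠ 1 for all (x, t), and suppose that for all (x, t), (1 − ψ²)·(∂_t ψ + ∂ₓ³ ψ) + 6·(∂ₓ ψ)·(ψ·∂ₓ² ψ − (∂ₓ ψ)²) = 0. Define u(x, t) = 2·∂ₓψ(x,t)/(1 − ψ(x,t)²) (equal to 2·∂ₓ(artanh ψ) where |ψ| < 1). Then u satisfies the negative mKdV equation: ∂_t u − 6·u²·∂ₓ u + ∂ₓ³ u = 0 on ℝ × ℝ. -/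
noncomputable def dX (F : ℝ × ℝ → ℝ) : ℝ × ℝ → ℝ := fun p => fderiv ℝ F p (1, 0)
noncomputable def dT (F : ℝ × ℝ → ℝ) : ℝ × ℝ → ℝ := fun p => fderiv ℝ F p (0, 1)

private lemma sliceX {F : ℝ × ℝ → ℝ} (hF : ContDiff ℝ (⊤ : ℕ∞) F) (x t : ℝ) :
    HasDerivAt (fun x' => F (x', t)) (dX F (x, t)) x := by
  have h := (hF.differentiable (by simp) (x, t)).hasFDerivAt.comp_hasDerivAt x
    ((hasDerivAt_id x).prodMk (hasDerivAt_const x t))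
  simpa [Function.comp_def, dX, dT] using h

private lemma sliceT {F : ℝ × ℝ → ℝ} (hF : ContDiff ℝ (⊤ : ℕ∞) F) (x t : ℝ) :
    HasDerivAt (fun t' => F (x, t')) (dT F (x, t)) t := by
  have h := (hF.differentiable (by simp) (x, t)).hasFDerivAt.comp_hasDerivAt t
    ((hasDerivAt_const t x).prodMk (hasDerivAt_id t))
  simpa [Function.comp_def, dX, dT] using h

private lemma smoothX {F : ℝ × ℝ → ℝ} (hF : ContDiff ℝ (⊤ : ℕ∞) F) :
    ContDiff ℝ (⊤ : ℕ∞) (dX F) :=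
  (hF.fderiv_right (by simp)).clm_apply contDiff_const

private lemma smoothT {F : ℝ × ℝ → ℝ} (hF : ContDiff ℝ (⊤ : ℕ∞) F) :
    ContDiff ℝ (⊤ : ℕ∞) (dT F) :=
  (hF.fderiv_right (by simp)).clm_apply contDiff_const

private lemma clairaut {F : ℝ × ℝ → ℝ} (hF : ContDiff ℝ (⊤ : ℕ∞) F) (p : ℝ × ℝ) :
    dT (dX F) p = dX (dT F) p := by
  have hd : Differentiable ℝ (fderiv ℝ F) :=
    (hF.fderiv_right (by simp)).differentiable (n := (⊤ : ℕ∞)) (by simp)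
  have h1 : dT (dX F) p = (fderiv ℝ (fderiv ℝ F) p) (0, 1) (1, 0) := by
    show fderiv ℝ (fun q => fderiv ℝ F q ((1:ℝ), (0:ℝ))) p (0, 1) = _
    rw [fderiv_clm_apply (hd p) (differentiableAt_const _)]
    simp
  have h2 : dX (dT F) p = (fderiv ℝ (fderiv ℝ F) p) (1, 0) (0, 1) := by
    show fderiv ℝ (fun q => fderiv ℝ F q ((0:ℝ), (1:ℝ))) p (1, 0) = _
    rw [fderiv_clm_apply (hd p) (differentiableAt_const _)]
    simp
  rw [h1, h2]
  exact second_derivative_symmetric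
    (fun y => (hF.differentiable (by simp) y).hasFDerivAt) (hd p).hasFDerivAt _ _

set_option maxHeartbeats 2000000 in
theorem stmt_15 (ψ : ℝ → ℝ → ℝ)
    (hψ : ContDiff ℝ (⊤ : ℕ∞) (Function.uncurry ψ))
    (hne : ∀ x t : ℝ, ψ x t ^ 2 ≠ 1)
    (heq : ∀ x t : ℝ,
      (1 - ψ x t ^ 2) * (pdt ψ x t + pdx (pdx (pdx ψ)) x t) +
        6 * pdx ψ x t * (ψ x t * pdx (pdx ψ) x t - (pdx ψ x t) ^ 2) = 0)
    (u : ℝ → ℝ → ℝ)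
    (hu : u = fun x t => 2 * pdx ψ x t / (1 - ψ x t ^ 2)) :
    ∀ x t : ℝ,
      pdt u x t - 6 * u x t ^ 2 * pdx u x t + pdx (pdx (pdx u)) x t = 0 := by
  have hap : ∀ a b : ℝ, Function.uncurry ψ (a, b) = ψ a b := fun _ _ => rfl
  have hF : ContDiff ℝ (⊤ : ℕ∞) (Function.uncurry ψ) := hψ
  have hb : ContDiff ℝ (⊤ : ℕ∞) (dX (Function.uncurry ψ)) := smoothX hF
  have hc : ContDiff ℝ (⊤ : ℕ∞) (dX (dX (Function.uncurry ψ))) := smoothX hb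
  have hd : ContDiff ℝ (⊤ : ℕ∞) (dX (dX (dX (Function.uncurry ψ)))) := smoothX hc
  have hT : ContDiff ℝ (⊤ : ℕ∞) (dT (Function.uncurry ψ)) := smoothT hF
  have hne' : ∀ x t : ℝ, 1 - ψ x t ^ 2 ≠ 0 :=
    fun x t => sub_ne_zero.mpr (Ne.symm (hne x t))
  have hp1 : ∀ x t : ℝ, pdx ψ x t = dX (Function.uncurry ψ) (x, t) :=
    fun x t => (sliceX hF x t).deriv
  have hp2 : ∀ x t : ℝ, pdx (pdx ψ) x t = dX (dX (Function.uncurry ψ)) (x, t) := by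
    intro x t
    have h1 : (fun x' => pdx ψ x' t) = fun x' => dX (Function.uncurry ψ) (x', t) :=
      funext fun x' => hp1 x' t
    show deriv (fun x' => pdx ψ x' t) x = _
    rw [h1]
    exact (sliceX hb x t).deriv
  have hp3 : ∀ x t : ℝ, pdx (pdx (pdx ψ)) x t = dX (dX (dX (Function.uncurry ψ))) (x, t) := by
    intro x t
    have h1 : (fun x' => pdx (pdx ψ) x' t) = fun x' => dX (dX (Function.uncurry ψ)) (x', t) :=
      funext fun x' => hp2 x' t
    show deriv (fun x' => pdx (pdx ψ) x' t) x = _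
    rw [h1]
    exact (sliceX hc x t).deriv
  have hq1 : ∀ x t : ℝ, pdt ψ x t = dT (Function.uncurry ψ) (x, t) :=
    fun x t => (sliceT hF x t).deriv
  have heqx : ∀ x t : ℝ,
      (1 - ψ x t ^ 2) * (dT (Function.uncurry ψ) (x, t) + dX (dX (dX (Function.uncurry ψ))) (x, t)) +
        6 * dX (Function.uncurry ψ) (x, t) * (ψ x t * dX (dX (Function.uncurry ψ)) (x, t) - dX (Function.uncurry ψ) (x, t) ^ 2) = 0 := by
    intro x t
    have h := heq x t
    rw [hq1 x t, hp3 x t, hp1 x t, hp2 x t] at h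
    exact h
  have hTval : ∀ x t : ℝ, dT (Function.uncurry ψ) (x, t) = -(dX (dX (dX (Function.uncurry ψ))) (x, t)) - 6 * dX (Function.uncurry ψ) (x, t) * (ψ x t * dX (dX (Function.uncurry ψ)) (x, t) - dX (Function.uncurry ψ) (x, t) ^ 2) / (1 - ψ x t ^ 2) := by
    intro x t
    have h := heqx x t
    have hD := hne' x t
    field_simp
    linear_combination h
  have hU : ∀ x t : ℝ, u x t = 2 * dX (Function.uncurry ψ) (x, t) / (1 - ψ x t ^ 2) := by
    intro x t
    rw [hu]
    show 2 * pdx ψ x t / (1 - ψ x t ^ 2) = _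
    rw [hp1 x t]
  have hux : ∀ x t : ℝ, pdx u x t = (2 * dX (dX (Function.uncurry ψ)) (x, t) * (1 - ψ x t ^ 2) + 4 * ψ x t * dX (Function.uncurry ψ) (x, t) ^ 2) / (1 - ψ x t ^ 2) ^ 2 := by
    intro x t
    have h1 : (fun x' => u x' t) = fun x' => 2 * dX (Function.uncurry ψ) (x', t) / (1 - ψ x' t ^ 2) :=
      funext fun x' => hU x' t
    have H : HasDerivAt (fun x' => 2 * dX (Function.uncurry ψ) (x', t) / (1 - ψ x' t ^ 2)) ((2 * dX (dX (Function.uncurry ψ)) (x, t) * (1 - ψ x t ^ 2) + 4 * ψ x t * dX (Function.uncurry ψ) (x, t) ^ 2) / (1 - ψ x t ^ 2) ^ 2) x := by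
      have H0 := ((sliceX hb x t).const_mul 2).fun_div
        ((hasDerivAt_const x (1:ℝ)).fun_sub ((sliceX hF x t).fun_pow 2)) (hne' x t)
      convert H0 using 1
      all_goals try rfl
      all_goals try simp only [hap]
      all_goals try rw [clairaut hF (x, t)]
      all_goals try push_cast
      all_goals try field_simp [hne' x t]
      all_goals try ring
    show deriv (fun x' => u x' t) x = _
    rw [h1]
    exact H.deriv
  have huxx : ∀ x t : ℝ, pdx (pdx u) x t = (2 * dX (dX (dX (Function.uncurry ψ))) (x, t) * (1 - ψ x t ^ 2) ^ 2 + 12 * ψ x t * dX (Function.uncurry ψ) (x, t) * dX (dX (Function.uncurry ψ)) (x, t) * (1 - ψ x t ^ 2) + 4 * dX (Function.uncurry ψ) (x, t) ^ 3 * (1 - ψ x t ^ 2) + 16 * ψ x t ^ 2 * dX (Function.uncurry ψ) (x, t) ^ 3) / (1 - ψ x t ^ 2) ^ 3 := by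
    intro x t
    have h1 : (fun x' => pdx u x' t) = fun x' => (2 * dX (dX (Function.uncurry ψ)) (x', t) * (1 - ψ x' t ^ 2) + 4 * ψ x' t * dX (Function.uncurry ψ) (x', t) ^ 2) / (1 - ψ x' t ^ 2) ^ 2 :=
      funext fun x' => hux x' t
    have H : HasDerivAt (fun x' => (2 * dX (dX (Function.uncurry ψ)) (x', t) * (1 - ψ x' t ^ 2) + 4 * ψ x' t * dX (Function.uncurry ψ) (x', t) ^ 2) / (1 - ψ x' t ^ 2) ^ 2) ((2 * dX (dX (dX (Function.uncurry ψ))) (x, t) * (1 - ψ x t ^ 2) ^ 2 + 12 * ψ x t * dX (Function.uncurry ψ) (x, t) * dX (dX (Function.uncurry ψ)) (x, t) * (1 - ψ x t ^ 2) + 4 * dX (Function.uncurry ψ) (x, t) ^ 3 * (1 - ψ x t ^ 2) + 16 * ψ x t ^ 2 * dX (Function.uncurry ψ) (x, t) ^ 3) / (1 - ψ x t ^ 2) ^ 3) x := by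
      have hDa := (hasDerivAt_const x (1:ℝ)).fun_sub ((sliceX hF x t).fun_pow 2)
      have H0 := ((((sliceX hc x t).const_mul 2).fun_mul hDa).fun_add
          (((sliceX hF x t).const_mul 4).fun_mul ((sliceX hb x t).fun_pow 2))).fun_div
        (hDa.fun_pow 2) (pow_ne_zero 2 (hne' x t))
      convert H0 using 1
      all_goals try rfl
      all_goals try simp only [hap]
      all_goals try rw [clairaut hF (x, t)]
      all_goals try push_cast
      all_goals try field_simp [hne' x t]
      all_goals try ring
    show deriv (fun x' => pdx u x' t) x = _
    rw [h1]
    exact H.deriv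
  have huxxx : ∀ x t : ℝ, pdx (pdx (pdx u)) x t = ((2 * dX (dX (dX (dX (Function.uncurry ψ)))) (x, t) * (1 - ψ x t ^ 2) ^ 2 + 4 * ψ x t * dX (Function.uncurry ψ) (x, t) * dX (dX (dX (Function.uncurry ψ))) (x, t) * (1 - ψ x t ^ 2) + 24 * dX (Function.uncurry ψ) (x, t) ^ 2 * dX (dX (Function.uncurry ψ)) (x, t) * (1 - ψ x t ^ 2) + 12 * ψ x t * dX (dX (Function.uncurry ψ)) (x, t) ^ 2 * (1 - ψ x t ^ 2) + 24 * ψ x t ^ 2 * dX (Function.uncurry ψ) (x, t) ^ 2 * dX (dX (Function.uncurry ψ)) (x, t) + 24 * ψ x t * dX (Function.uncurry ψ) (x, t) ^ 4) * (1 - ψ x t ^ 2) + 6 * ψ x t * dX (Function.uncurry ψ) (x, t) * (2 * dX (dX (dX (Function.uncurry ψ))) (x, t) * (1 - ψ x t ^ 2) ^ 2 + 12 * ψ x t * dX (Function.uncurry ψ) (x, t) * dX (dX (Function.uncurry ψ)) (x, t) * (1 - ψ x t ^ 2) + 4 * dX (Function.uncurry ψ) (x, t) ^ 3 * (1 - ψ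 x t ^ 2) + 16 * ψ x t ^ 2 * dX (Function.uncurry ψ) (x, t) ^ 3)) / (1 - ψ x t ^ 2) ^ 4 := by
    intro x t
    have h1 : (fun x' => pdx (pdx u) x' t) = fun x' => (2 * dX (dX (dX (Function.uncurry ψ))) (x', t) * (1 - ψ x' t ^ 2) ^ 2 + 12 * ψ x' t * dX (Function.uncurry ψ) (x', t) * dX (dX (Function.uncurry ψ)) (x', t) * (1 - ψ x' t ^ 2) + 4 * dX (Function.uncurry ψ) (x', t) ^ 3 * (1 - ψ x' t ^ 2) + 16 * ψ x' t ^ 2 * dX (Function.uncurry ψ) (x', t) ^ 3) / (1 - ψ x' t ^ 2) ^ 3 :=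
      funext fun x' => huxx x' t
    have H : HasDerivAt (fun x' => (2 * dX (dX (dX (Function.uncurry ψ))) (x', t) * (1 - ψ x' t ^ 2) ^ 2 + 12 * ψ x' t * dX (Function.uncurry ψ) (x', t) * dX (dX (Function.uncurry ψ)) (x', t) * (1 - ψ x' t ^ 2) + 4 * dX (Function.uncurry ψ) (x', t) ^ 3 * (1 - ψ x' t ^ 2) + 16 * ψ x' t ^ 2 * dX (Function.uncurry ψ) (x', t) ^ 3) / (1 - ψ x' t ^ 2) ^ 3) (((2 * dX (dX (dX (dX (Function.uncurry ψ)))) (x, t) * (1 - ψ x t ^ 2) ^ 2 + 4 * ψ x t * dX (Function.uncurry ψ) (x, t) * dX (dX (dX (Function.uncurry ψ))) (x, t) * (1 - ψ x t ^ 2) + 24 * dX (Function.uncurry ψ) (x, t) ^ 2 * dX (dX (Function.uncurry ψ)) (x, t) * (1 - ψ x t ^ 2) + 12 * ψ x t * dX (dX (Function.uncurry ψ)) (x, t) ^ 2 * (1 - ψ x t ^ 2) + 24 * ψ x t ^ 2 * dX (Function.uncurry ψ) (x, t) ^ 2 * dX (dX (Function.uncurry ψ)) (x, t) + 24 * ψ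 x t * dX (Function.uncurry ψ) (x, t) ^ 4) * (1 - ψ x t ^ 2) + 6 * ψ x t * dX (Function.uncurry ψ) (x, t) * (2 * dX (dX (dX (Function.uncurry ψ))) (x, t) * (1 - ψ x t ^ 2) ^ 2 + 12 * ψ x t * dX (Function.uncurry ψ) (x, t) * dX (dX (Function.uncurry ψ)) (x, t) * (1 - ψ x t ^ 2) + 4 * dX (Function.uncurry ψ) (x, t) ^ 3 * (1 - ψ x t ^ 2) + 16 * ψ x t ^ 2 * dX (Function.uncurry ψ) (x, t) ^ 3)) / (1 - ψ x t ^ 2) ^ 4) x := by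
      have hDa := (hasDerivAt_const x (1:ℝ)).fun_sub ((sliceX hF x t).fun_pow 2)
      have H0 := (((((sliceX hd x t).const_mul 2).fun_mul (hDa.fun_pow 2)).fun_add
          (((((sliceX hF x t).const_mul 12).fun_mul (sliceX hb x t)).fun_mul (sliceX hc x t)).fun_mul hDa)).fun_add
          ((((sliceX hb x t).fun_pow 3).const_mul 4).fun_mul hDa)).fun_add
          ((((sliceX hF x t).fun_pow 2).const_mul 16).fun_mul ((sliceX hb x t).fun_pow 3)) |>.fun_div
        (hDa.fun_pow 3) (pow_ne_zero 3 (hne' x t))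
      convert H0 using 1
      all_goals try rfl
      all_goals try simp only [hap]
      all_goals try rw [clairaut hF (x, t)]
      all_goals try push_cast
      all_goals try field_simp [hne' x t]
      all_goals try ring
    show deriv (fun x' => pdx (pdx u) x' t) x = _
    rw [h1]
    exact H.deriv
  have hbt : ∀ x t : ℝ, dX (dT (Function.uncurry ψ)) (x, t) = -(dX (dX (dX (dX (Function.uncurry ψ)))) (x, t)) - 6 * ((dX (dX (Function.uncurry ψ)) (x, t) * (ψ x t * dX (dX (Function.uncurry ψ)) (x, t) - dX (Function.uncurry ψ) (x, t) ^ 2) + dX (Function.uncurry ψ) (x, t) * (ψ x t * dX (dX (dX (Function.uncurry ψ))) (x, t) - dX (Function.uncurry ψ) (x, t) * dX (dX (Function.uncurry ψ)) (x, t))) * (1 - ψ x t ^ 2) + 2 * ψ x t * dX (Function.uncurry ψ) (x, t) ^ 2 * (ψ x t * dX (dX (Function.uncurry ψ)) (x, t) - dX (Function.uncurry ψ) (x, t) ^ 2)) / (1 - ψ x t ^ 2) ^ 2 := by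
    intro x t
    have hTfun : (fun x' => dT (Function.uncurry ψ) (x', t)) = fun x' => -(dX (dX (dX (Function.uncurry ψ))) (x', t)) - 6 * dX (Function.uncurry ψ) (x', t) * (ψ x' t * dX (dX (Function.uncurry ψ)) (x', t) - dX (Function.uncurry ψ) (x', t) ^ 2) / (1 - ψ x' t ^ 2) :=
      funext fun x' => hTval x' t
    have H : HasDerivAt (fun x' => -(dX (dX (dX (Function.uncurry ψ))) (x', t)) - 6 * dX (Function.uncurry ψ) (x', t) * (ψ x' t * dX (dX (Function.uncurry ψ)) (x', t) - dX (Function.uncurry ψ) (x', t) ^ 2) / (1 - ψ x' t ^ 2)) (-(dX (dX (dX (dX (Function.uncurry ψ)))) (x, t)) - 6 * ((dX (dX (Function.uncurry ψ)) (x, t) * (ψ x t * dX (dX (Function.uncurry ψ)) (x, t) - dX (Function.uncurry ψ) (x, t) ^ 2) + dX (Function.uncurry ψ) (x, t) * (ψ x t * dX (dX (dX (Function.uncurry ψ))) (x, t) - dX (Function.uncurry ψ) (x, t) * dX (dX (Function.uncurry ψ)) (x, t))) * (1 - ψ x t ^ 2) + 2 * ψ x t * dX (Function.uncurry ψ) (x,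 t) ^ 2 * (ψ x t * dX (dX (Function.uncurry ψ)) (x, t) - dX (Function.uncurry ψ) (x, t) ^ 2)) / (1 - ψ x t ^ 2) ^ 2) x := by
      have hDa := (hasDerivAt_const x (1:ℝ)).fun_sub ((sliceX hF x t).fun_pow 2)
      have H0 := ((sliceX hd x t).fun_neg).fun_sub
        ((((sliceX hb x t).const_mul 6).fun_mul
          (((sliceX hF x t).fun_mul (sliceX hc x t)).fun_sub ((sliceX hb x t).fun_pow 2))).fun_div
          hDa (hne' x t))
      convert H0 using 1
      all_goals try rfl
      all_goals try simp only [hap]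
      all_goals try rw [clairaut hF (x, t)]
      all_goals try push_cast
      all_goals try field_simp [hne' x t]
      all_goals try ring
    have H' : HasDerivAt (fun x' => dT (Function.uncurry ψ) (x', t)) (-(dX (dX (dX (dX (Function.uncurry ψ)))) (x, t)) - 6 * ((dX (dX (Function.uncurry ψ)) (x, t) * (ψ x t * dX (dX (Function.uncurry ψ)) (x, t) - dX (Function.uncurry ψ) (x, t) ^ 2) + dX (Function.uncurry ψ) (x, t) * (ψ x t * dX (dX (dX (Function.uncurry ψ))) (x, t) - dX (Function.uncurry ψ) (x, t) * dX (dX (Function.uncurry ψ)) (x, t))) * (1 - ψ x t ^ 2) + 2 * ψ x t * dX (Function.uncurry ψ) (x, t) ^ 2 * (ψ x t * dX (dX (Function.uncurry ψ)) (x, t) - dX (Function.uncurry ψ) (x, t) ^ 2)) / (1 - ψ x t ^ 2) ^ 2) x := by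
      rw [hTfun]; exact H
    exact (sliceX hT x t).unique H'
  have hut : ∀ x t : ℝ, pdt u x t = (2 * dX (dT (Function.uncurry ψ)) (x, t) * (1 - ψ x t ^ 2) + 4 * ψ x t * dT (Function.uncurry ψ) (x, t) * dX (Function.uncurry ψ) (x, t)) / (1 - ψ x t ^ 2) ^ 2 := by
    intro x t
    have h1 : (fun t' => u x t') = fun t' => 2 * dX (Function.uncurry ψ) (x, t') / (1 - ψ x t' ^ 2) :=
      funext fun t' => hU x t'
    have H : HasDerivAt (fun t' => 2 * dX (Function.uncurry ψ) (x, t') / (1 - ψ x t' ^ 2)) ((2 * dX (dT (Function.uncurry ψ)) (x, t) * (1 - ψ x t ^ 2) + 4 * ψ x t * dT (Function.uncurry ψ) (x, t) * dX (Function.uncurry ψ) (x, t)) / (1 - ψ x t ^ 2) ^ 2) t := by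
      have H0 := ((sliceT hb x t).const_mul 2).fun_div
        ((hasDerivAt_const t (1:ℝ)).fun_sub ((sliceT hF x t).fun_pow 2)) (hne' x t)
      convert H0 using 1
      all_goals try rfl
      all_goals try simp only [hap]
      all_goals try rw [clairaut hF (x, t)]
      all_goals try push_cast
      all_goals try field_simp [hne' x t]
      all_goals try ring
    show deriv (fun t' => u x t') t = _
    rw [h1]
    exact H.deriv
  intro x t
  have hD := hne' x t
  rw [hut x t, hU x t, hux x t, huxxx x t, hbt x t, hTval x t]
  field_simp
  ring
end

section
/- (Algebraic identity underlying the Gauss-type transformation (46)–(47).) Let k ∈ ℂ, let (S, C, D) be a Jacobi triple with modulus k, let ε ∈ {1, −1}, and let α, β ∈ ℂ with α² = k and β² = k − 1. Then for every z ∈ ℂ: ((ε·β + α)·(α·C(z)² − ε·β))² + ((α + ε·β)·S(z)·D(z))² = C(z)². Equivalently, at every z with C(z) ≠ 0, the functions S̃ = (εβ+α)·(α·C − ε·β/C) and C̃ = −(α+εβ)·S·D/C satisfy S̃² + C̃² = 1. -/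
theorem stmt_19 (k : ℂ) (S C D : ℂ → ℂ) (hJ : IsJacobiTriple k S C D)
    (ε : ℂ) (hε : ε = 1 ∨ ε = -1)
    (α β : ℂ) (hα : α ^ 2 = k) (hβ : β ^ 2 = k - 1) :
    ∀ z : ℂ,
      ((ε * β + α) * (α * C z ^ 2 - ε * β)) ^ 2 +
        ((α + ε * β) * S z * D z) ^ 2 = C z ^ 2 := by
  intro z
  obtain ⟨-, -, -, h1, h2⟩ := hJ z
  have hs : S z ^ 2 = 1 - C z ^ 2 := by linear_combination h1
  have hd : D z ^ 2 = 1 - k + k * C z ^ 2 := by linear_combination h2 - k * hs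
  set c := C z ^ 2 with hc
  set P := (α + ε * β) ^ 2 with hPdef
  set Q := c * (2 * k - 1 - 2 * ε * α * β) with hQdef
  rcases hε with h | h <;> subst h <;>
    linear_combination (P * c ^ 2 + Q - 4 * c * β ^ 2) * hα + (P + Q - 4 * c * k) * hβ +
      P * D z ^ 2 * hs + P * (1 - c) * hd
end
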